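/- Let α ≥ 3 and define F_α(x) = 1 + x^α − x^{(3α−1)/2}(2x−1)^{(1−α)/2} − x^{(α−1)/2} on [1, 3/2]. Then F_α(x) ≥ ((α−1)²/4)(x−1)² for all x ∈ [1, 3/2]. -/

import Mathlib

/-!
With `γ = (α - 1) / 2 ≥ 1` and `P = x³ / (2x - 1) ∈ [1, x²]` one has
`F_α(x) = (1 - x^γ) + x ((x²)^γ - P^γ)`. On `[1, h]` the function `y ↦ y^γ - γ(γ-1)/(2h) y²` is
convex, which gives second-order Taylor lower bounds for both differences, expanded at `x` and at
`P`. The first-order terms add up to `γ (x - 1) (P^γ - x^(γ-1))`, which Bernoulli's inequality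
bounds below by `γ (x - 1)²` plus a cubic surplus; the second-order terms supply
`γ (γ - 1) (x - 1)²` up to a cubic deficit that this surplus absorbs.
-/

open Real Set

theorem ConvexOn.add_mul_sub_le_of_hasDerivAt {S : Set ℝ} {f : ℝ → ℝ} {f' x y : ℝ}
    (hf : ConvexOn ℝ S f) (hx : x ∈ S) (hy : y ∈ S) (hf' : HasDerivAt f f' x) :
    f x + f' * (y - x) ≤ f y := by
  rcases lt_trichotomy x y with hxy | rfl | hyx
  · have h := hf.le_slope_of_hasDerivAt hx hy hxy hf'
    rw [slope_def_field, le_div_iff₀ (sub_pos.2 hxy)] at h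
    linarith
  · simp
  · have h := hf.slope_le_of_hasDerivAt hy hx hyx hf'
    rw [slope_def_field, div_le_iff₀ (sub_pos.2 hyx)] at h
    linarith

theorem convexOn_rpow_sub_mul_sq {γ h : ℝ} (hγ : 1 ≤ γ) :
    ConvexOn ℝ (Icc 1 h) (fun y ↦ y ^ γ - γ * (γ - 1) / (2 * h) * y ^ 2) := by
  refine convexOn_of_hasDerivWithinAt2_nonneg (convex_Icc 1 h)
    (f' := fun y ↦ γ * y ^ (γ - 1) - γ * (γ - 1) / h * y)
    (f'' := fun y ↦ γ * ((γ - 1) * y ^ (γ - 1 - 1)) - γ * (γ - 1) / h) ?_ ?_ ?_ ?_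
  · refine ContinuousOn.sub (fun y hy ↦ ?_) (by fun_prop)
    exact (continuousAt_rpow_const _ _ (Or.inr (by linarith))).continuousWithinAt
  · rw [interior_Icc]
    intro y hy
    have hy0 : y ≠ 0 := by linarith [hy.1]
    refine HasDerivAt.hasDerivWithinAt ?_
    convert (hasDerivAt_rpow_const (p := γ) (Or.inl hy0)).fun_sub
      ((hasDerivAt_pow 2 y).const_mul (γ * (γ - 1) / (2 * h))) using 1
    have : h ≠ 0 := by linarith [hy.1, hy.2]
    field_simp
    ring
  · rw [interior_Icc]
    intro y hy
    have hy0 : y ≠ 0 := by linarith [hy.1]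
    refine HasDerivAt.hasDerivWithinAt ?_
    convert ((hasDerivAt_rpow_const (p := γ - 1) (Or.inl hy0)).const_mul γ).fun_sub
      ((hasDerivAt_id y).const_mul (γ * (γ - 1) / h)) using 1
    all_goals simp only [id, mul_one]
  · rw [interior_Icc]
    intro y ⟨hy1, hyh⟩
    have hinv : 1 / h ≤ y ^ (γ - 1 - 1) := calc
      1 / h ≤ y ^ (-1 : ℝ) := by rw [rpow_neg_one, one_div]; gcongr
      _ ≤ y ^ (γ - 1 - 1) := rpow_le_rpow_of_exponent_le hy1.le (by linarith)
    have := mul_le_mul_of_nonneg_left hinv (by nlinarith : 0 ≤ γ * (γ - 1))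
    simp only [mul_one_div] at this
    linarith

theorem add_mul_sub_add_mul_sq_le_rpow {γ h a b : ℝ} (hγ : 1 ≤ γ) (ha : a ∈ Icc 1 h)
    (hb : b ∈ Icc 1 h) :
    a ^ γ + γ * a ^ (γ - 1) * (b - a) + γ * (γ - 1) / (2 * h) * (b - a) ^ 2 ≤ b ^ γ := by
  have hderiv : HasDerivAt (fun y ↦ y ^ γ - γ * (γ - 1) / (2 * h) * y ^ 2)
      (γ * a ^ (γ - 1) - γ * (γ - 1) / (2 * h) * (2 * a)) a := by
    have := (hasDerivAt_rpow_const (p := γ) (Or.inl (by linarith [ha.1] : a ≠ 0))).fun_sub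
      ((hasDerivAt_pow 2 a).const_mul (γ * (γ - 1) / (2 * h)))
    simpa using this
  linear_combination (convexOn_rpow_sub_mul_sq hγ).add_mul_sub_le_of_hasDerivAt ha hb hderiv

noncomputable def Falpha (α x : ℝ) : ℝ :=
  1 + x ^ α - x ^ ((3 * α - 1) / 2) * (2 * x - 1) ^ ((1 - α) / 2) - x ^ ((α - 1) / 2)

noncomputable def Fgamma (γ x : ℝ) : ℝ :=
  1 - x ^ γ + x * ((x ^ 2) ^ γ - (x ^ 3 / (2 * x - 1)) ^ γ)

theorem Falpha_eq_Fgamma (α : ℝ) {x : ℝ} (hx : 1 / 2 < x) :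
    Falpha α x = Fgamma ((α - 1) / 2) x := by
  have hx0 : 0 < x := by linarith
  have h2x : 0 < 2 * x - 1 := by linarith
  set γ := (α - 1) / 2
  have hpow : x ^ α = x * (x ^ 2) ^ γ := by
    rw [show α = 1 + 2 * γ by ring, rpow_add hx0, rpow_one, rpow_mul hx0.le, rpow_two]
  have hcube : x ^ ((3 * α - 1) / 2) * (2 * x - 1) ^ ((1 - α) / 2)
      = x * (x ^ 3 / (2 * x - 1)) ^ γ := by
    rw [show (3 * α - 1) / 2 = 1 + 3 * γ by ring, show (1 - α) / 2 = -γ by ring,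
      rpow_add hx0, rpow_one, rpow_mul hx0.le, rpow_neg h2x.le, ← rpow_ofNat,
      div_rpow (by positivity) h2x.le]
    ring
  rw [Falpha, Fgamma, hpow, hcube]
  ring

theorem sub_one_add_mul_le_rpow_sub_rpow {γ x : ℝ} (hγ : 1 ≤ γ) (hx : 1 ≤ x) :
    x - 1 + γ * x * ((x - 1) ^ 2 / (2 * x - 1)) ≤
      (x ^ 3 / (2 * x - 1)) ^ γ - x ^ (γ - 1) := by
  have hx0 : 0 < x := by linarith
  have h2x : 0 < 2 * x - 1 := by linarith
  have hq : 0 ≤ (x - 1) ^ 2 / (2 * x - 1) := by positivity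
  have hbernoulli : 1 + γ * ((x - 1) ^ 2 / (2 * x - 1)) ≤ (x ^ 2 / (2 * x - 1)) ^ γ := by
    have hsq : x ^ 2 / (2 * x - 1) = 1 + (x - 1) ^ 2 / (2 * x - 1) := by
      rw [one_add_div h2x.ne']
      ring
    rw [hsq]
    exact one_add_mul_self_le_rpow_one_add (by linarith) hγ
  have hX : 1 ≤ x ^ (γ - 1) := one_le_rpow hx (by linarith)
  have hsplit : (x ^ 3 / (2 * x - 1)) ^ γ = x ^ (γ - 1) * (x * (x ^ 2 / (2 * x - 1)) ^ γ) := by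
    rw [← mul_assoc, ← rpow_add_one hx0.ne', sub_add_cancel, ← mul_rpow hx0.le (by positivity)]
    ring_nf
  have hxs : x - 1 + γ * x * ((x - 1) ^ 2 / (2 * x - 1))
      ≤ x * (x ^ 2 / (2 * x - 1)) ^ γ - 1 := by
    linear_combination mul_le_mul_of_nonneg_left hbernoulli hx0.le
  have hlhs : 0 ≤ x - 1 + γ * x * ((x - 1) ^ 2 / (2 * x - 1)) := by
    have : 0 ≤ γ * x * ((x - 1) ^ 2 / (2 * x - 1)) := by positivity
    linarith
  calc x - 1 + γ * x * ((x - 1) ^ 2 / (2 * x - 1))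
      ≤ x * (x ^ 2 / (2 * x - 1)) ^ γ - 1 := hxs
    _ ≤ x ^ (γ - 1) * (x * (x ^ 2 / (2 * x - 1)) ^ γ - 1) :=
      le_mul_of_one_le_left (hlhs.trans hxs) hX
    _ = (x ^ 3 / (2 * x - 1)) ^ γ - x ^ (γ - 1) := by rw [hsplit]; ring

theorem taylor_le_Fgamma {γ x : ℝ} (hγ : 1 ≤ γ) (hx : 1 ≤ x) :
    γ * (x - 1) * ((x ^ 3 / (2 * x - 1)) ^ γ - x ^ (γ - 1))
      + γ * (γ - 1) / 2 * (x - 1) ^ 2 * (1 / x + x ^ 3 / (2 * x - 1) ^ 2) ≤ Fgamma γ x := by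
  have hx0 : 0 < x := by linarith
  have h2x : 0 < 2 * x - 1 := by linarith
  set P := x ^ 3 / (2 * x - 1) with hP
  have hP_mem : P ∈ Icc 1 (x ^ 2) := by
    constructor
    · rw [le_div_iff₀ h2x]
      nlinarith [sq_nonneg (x - 1), mul_nonneg (sq_nonneg x) (sub_nonneg.2 hx)]
    · rw [div_le_iff₀ h2x]
      nlinarith [mul_nonneg (sq_nonneg x) (sub_nonneg.2 hx)]
  have hT1 := add_mul_sub_add_mul_sq_le_rpow hγ ⟨hx, le_rfl⟩ ⟨le_rfl, hx⟩
  have hT2 := add_mul_sub_add_mul_sq_le_rpow hγ hP_mem ⟨one_le_pow₀ hx, le_rfl⟩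
  rw [one_rpow] at hT1
  rw [rpow_sub_one (by positivity)] at hT2
  -- `field_simp` looks for this normal form of the denominator `2 * x - 1`
  have h2x' : x * 2 - 1 ≠ 0 := by linarith
  have e1 : x * (P ^ γ / P) * (x ^ 2 - P) = P ^ γ * (x - 1) := by
    rw [hP]; field_simp; ring
  have e2 : x * (γ * (γ - 1) / (2 * x ^ 2)) * (x ^ 2 - P) ^ 2
      = γ * (γ - 1) / 2 * (x ^ 3 / (2 * x - 1) ^ 2) * (x - 1) ^ 2 := by
    rw [hP]; field_simp; ring
  rw [Fgamma]
  linear_combination hT1 + mul_le_mul_of_nonneg_left hT2 hx0.le - γ * e1 - e2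

theorem sq_mul_sub_one_sq_le_taylor {γ x : ℝ} (hγ : 1 ≤ γ) (hx : 1 ≤ x) :
    γ ^ 2 * (x - 1) ^ 2 ≤ γ * (x - 1) * (x - 1 + γ * x * ((x - 1) ^ 2 / (2 * x - 1)))
      + γ * (γ - 1) / 2 * (x - 1) ^ 2 * (1 / x + x ^ 3 / (2 * x - 1) ^ 2) := by
  obtain ⟨u, hu, rfl⟩ : ∃ u, 0 ≤ u ∧ x = 1 + u := ⟨x - 1, by linarith, by ring⟩
  obtain ⟨δ, hδ, rfl⟩ : ∃ δ, 0 ≤ δ ∧ γ = 1 + δ := ⟨γ - 1, by linarith, by ring⟩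
  have hgap : 0 ≤ (1 + δ) * u ^ 2 * ((1 + u) * u / (1 + 2 * u)
      + δ * u ^ 2 * (2 + 6 * u + 5 * u ^ 2) / (2 * (1 + u) * (1 + 2 * u) ^ 2)) := by
    positivity
  rw [← sub_nonneg]
  convert hgap using 1
  rw [show 2 * (1 + u) - 1 = 1 + 2 * u by ring]
  field_simp
  ring

theorem sq_mul_sub_one_sq_le_Fgamma {γ x : ℝ} (hγ : 1 ≤ γ) (hx : 1 ≤ x) :
    γ ^ 2 * (x - 1) ^ 2 ≤ Fgamma γ x := by
  have hu : 0 ≤ γ * (x - 1) := mul_nonneg (by linarith) (by linarith)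
  calc γ ^ 2 * (x - 1) ^ 2
      ≤ γ * (x - 1) * (x - 1 + γ * x * ((x - 1) ^ 2 / (2 * x - 1)))
        + γ * (γ - 1) / 2 * (x - 1) ^ 2 * (1 / x + x ^ 3 / (2 * x - 1) ^ 2) :=
      sq_mul_sub_one_sq_le_taylor hγ hx
    _ ≤ γ * (x - 1) * ((x ^ 3 / (2 * x - 1)) ^ γ - x ^ (γ - 1))
        + γ * (γ - 1) / 2 * (x - 1) ^ 2 * (1 / x + x ^ 3 / (2 * x - 1) ^ 2) := by
      gcongr
      exact sub_one_add_mul_le_rpow_sub_rpow hγ hx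
    _ ≤ Fgamma γ x := taylor_le_Fgamma hγ hx

theorem Falpha_lower_bound (α : ℝ) (hα : 3 ≤ α) :
    ∀ x ∈ Set.Icc (1 : ℝ) (3 / 2),
      ((α - 1) ^ 2 / 4) * (x - 1) ^ 2 ≤
        1 + x ^ α - x ^ ((3 * α - 1) / 2) * (2 * x - 1) ^ ((1 - α) / 2) -
          x ^ ((α - 1) / 2) := by
  rintro x ⟨hx, -⟩
  change _ ≤ Falpha α x
  rw [Falpha_eq_Fgamma α (by linarith), show (α - 1) ^ 2 / 4 = ((α - 1) / 2) ^ 2 by ring]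
  exact sq_mul_sub_one_sq_le_Fgamma (by linarith) hx
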